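/- arXiv:1801.08507 — 2 statements merged into one kernel-verified Lean document; each statement's English description precedes it below -/
import Mathlib

section
/- With $\psi$ as defined via $r(x) = \frac{3-\sqrt{1+8(1-2x)^2}}{8}$ and $\psi(x) = H(2r(x)) + 4r(x) + 2(1-2r(x))H\!\left(\frac{x-r(x)}{1-2r(x)}\right) - 2H(x)$ on $[0,1/2]$, one has $\psi(x) \le \min\{2\log_2 3 \cdot x,\ 1\}$ for all $x \in [0,1/2]$, with $\psi(x) = 2\log_2(3)x$ only at $x = 0$ and $\psi(x) = 1$ only at $x = 1/2$. -/
/-!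
Writing `η t = -t log t` and `h` for the binary entropy in nats, the identity
`(a + b) h(a / (a + b)) = η a + η b - η (a + b)` turns `ψ(x) log 2` into `Φ(x, r x)` with
`Φ(x, ρ) = 2ρ log 2 + 2η ρ - η (1 - 2ρ) + 2η (x - ρ) + 2η (1 - x - ρ) - 2h x`.
Since `r` solves `4r² - 3r + 2x(1 - x) = 0`, i.e. `2(x - r)(1 - x - r) = r(1 - 2r)`, it is a critical
point of `Φ(x, ·)`, so `ψ'(x) = 2 log₂ (x(1 - x - r) / ((x - r)(1 - x)))`. On `(0, 1/2)` this ratio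
lies in `(1, 3)`, hence `ψ` and `2 log₂ 3 · x - ψ` are strictly increasing on `[0, 1/2]`, and
`ψ 0 = 0`, `ψ (1/2) = 1` give the claim.
-/

/-- Binary entropy `H(p) = -p log₂ p - (1-p) log₂ (1-p)`. -/
noncomputable def H (p : ℝ) : ℝ := -p * Real.logb 2 p - (1 - p) * Real.logb 2 (1 - p)

/-- `r(x) = (3 - √(1 + 8(1-2x)²)) / 8`. -/
noncomputable def r (x : ℝ) : ℝ := (3 - Real.sqrt (1 + 8 * (1 - 2 * x) ^ 2)) / 8

/-- `ψ(x) = H(2r) + 4r + 2(1-2r) H((x-r)/(1-2r)) - 2H(x)`. -/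
noncomputable def psi (x : ℝ) : ℝ :=
  H (2 * r x) + 4 * r x + 2 * (1 - 2 * r x) * H ((x - r x) / (1 - 2 * r x)) - 2 * H x

open Real Set

lemma H_eq_binEntropy_div (p : ℝ) : H p = binEntropy p / log 2 := by
  rw [binEntropy_eq_negMulLog_add_negMulLog_one_sub, H, negMulLog, negMulLog, logb, logb]
  ring

lemma mul_binEntropy_div_add {a b : ℝ} (hab : a + b ≠ 0) :
    (a + b) * binEntropy (a / (a + b)) = negMulLog a + negMulLog b - negMulLog (a + b) := by
  have hb : 1 - a / (a + b) = b / (a + b) := by field_simp; ring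
  rw [binEntropy_eq_negMulLog_add_negMulLog_one_sub, hb, div_eq_mul_inv, div_eq_mul_inv,
    negMulLog_mul, negMulLog_mul]
  simp only [negMulLog, log_inv]
  field_simp
  ring

lemma r_sq_eq (x : ℝ) : 4 * r x ^ 2 - 3 * r x + 2 * x * (1 - x) = 0 := by
  have := Real.sq_sqrt (by positivity : (0 : ℝ) ≤ 1 + 8 * (1 - 2 * x) ^ 2)
  unfold r
  linear_combination this / 16

lemma r_le_quarter (x : ℝ) : r x ≤ 1 / 4 := by
  have : 1 ≤ √(1 + 8 * (1 - 2 * x) ^ 2) := Real.one_le_sqrt.2 (by nlinarith)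
  unfold r; linarith

lemma continuous_r : Continuous r := by unfold r; fun_prop

lemma differentiable_r : Differentiable ℝ r := by
  intro x
  have : 1 + 8 * (1 - 2 * x) ^ 2 ≠ 0 := by positivity
  unfold r
  fun_prop (disch := assumption)

lemma r_zero : r 0 = 0 := by
  rw [r, show (1 : ℝ) + 8 * (1 - 2 * 0) ^ 2 = 3 ^ 2 by norm_num, sqrt_sq (by norm_num)]
  norm_num

lemma r_half : r (1 / 2) = 1 / 4 := by
  norm_num [r]

lemma r_pos {x : ℝ} (hx₀ : 0 < x) (hx₁ : x < 1) : 0 < r x := by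
  have : √(1 + 8 * (1 - 2 * x) ^ 2) < 3 := by
    rw [sqrt_lt' (by norm_num)]; nlinarith
  unfold r; linarith

lemma r_lt_self {x : ℝ} (hx₀ : 0 < x) : r x < x := by
  nlinarith [r_sq_eq x, r_le_quarter x]

lemma two_mul_sub_r_mul_eq (x : ℝ) : 2 * (x - r x) * (1 - x - r x) = r x * (1 - 2 * r x) := by
  linear_combination r_sq_eq x

lemma psi_eq : psi = fun x ↦ (2 * log 2 * r x + 2 * negMulLog (r x) - negMulLog (1 - 2 * r x)
    + 2 * negMulLog (x - r x) + 2 * negMulLog (1 - x - r x) - 2 * binEntropy x) / log 2 := by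
  ext x
  have hsum : (x - r x) + (1 - x - r x) = 1 - 2 * r x := by ring
  have hq := mul_binEntropy_div_add (a := x - r x) (b := 1 - x - r x)
    (by rw [hsum]; linarith [r_le_quarter x])
  rw [hsum] at hq
  have h2r : negMulLog (2 * r x) = 2 * negMulLog (r x) - 2 * log 2 * r x := by
    rw [negMulLog_mul, negMulLog]; ring
  rw [eq_div_iff (log_pos one_lt_two).ne']
  simp only [psi, H_eq_binEntropy_div, binEntropy_eq_negMulLog_add_negMulLog_one_sub (2 * r x)]
  field_simp
  linear_combination 2 * hq + h2r

lemma continuous_psi : Continuous psi := by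
  rw [psi_eq]
  have := continuous_r
  fun_prop

lemma log_two_mul_sub_r_mul_eq {x : ℝ} (hx₀ : 0 < x) (hx₁ : x < 1 / 2) :
    log 2 + log (x - r x) + log (1 - x - r x) = log (r x) + log (1 - 2 * r x) := by
  have hr := r_le_quarter x
  have hrx := r_lt_self hx₀
  rw [← log_mul (by norm_num) (by linarith), ← log_mul (by positivity) (by linarith),
    ← log_mul (r_pos hx₀ (by linarith)).ne' (by linarith), two_mul_sub_r_mul_eq]

lemma hasDerivAt_psi {x : ℝ} (hx₀ : 0 < x) (hx₁ : x < 1 / 2) :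
    HasDerivAt psi (2 * logb 2 (x * (1 - x - r x) / ((x - r x) * (1 - x)))) x := by
  have hr₀ := r_pos hx₀ (by linarith)
  have hr₁ := r_le_quarter x
  have hrx := r_lt_self hx₀
  have hr := (differentiable_r x).hasDerivAt
  set r' := deriv r x
  have h₁ : HasDerivAt (fun y ↦ 1 - 2 * r y) (-(2 * r')) x := (hr.const_mul 2).const_sub 1
  have h₂ : HasDerivAt (fun y ↦ y - r y) (1 - r') x := (hasDerivAt_id' x).sub hr
  have h₃ : HasDerivAt (fun y ↦ 1 - y - r y) (-1 - r') x := ((hasDerivAt_id' x).const_sub 1).sub hr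
  have hR := (hr.const_mul (2 * log 2)).add ((hasDerivAt_negMulLog hr₀.ne').comp x hr |>.const_mul 2)
    |>.sub ((hasDerivAt_negMulLog (by linarith)).comp x h₁)
    |>.add (((hasDerivAt_negMulLog (by linarith)).comp x h₂).const_mul 2)
    |>.add (((hasDerivAt_negMulLog (by linarith)).comp x h₃).const_mul 2)
    |>.sub ((hasDerivAt_binEntropy hx₀.ne' (by linarith)).const_mul 2) |>.div_const (log 2)
  rw [psi_eq]
  refine hR.congr_deriv ?_
  have hcrit := log_two_mul_sub_r_mul_eq hx₀ hx₁
  rw [logb, log_div (by nlinarith) (by nlinarith), log_mul (by positivity) (by linarith),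
    log_mul (by linarith) (by linarith)]
  field_simp
  -- `r'` drops out because `r x` is a critical point of `Φ(x, ·)`
  linear_combination r' * hcrit

lemma psi_deriv_ratio_mem_Ioo {x : ℝ} (hx₀ : 0 < x) (hx₁ : x < 1 / 2) :
    x * (1 - x - r x) / ((x - r x) * (1 - x)) ∈ Ioo 1 3 := by
  have hr₀ := r_pos hx₀ (by linarith)
  have hrx := r_lt_self hx₀
  have hden : 0 < (x - r x) * (1 - x) := by nlinarith
  rw [mem_Ioo, one_lt_div hden, div_lt_iff₀ hden]
  constructor
  · nlinarith
  · nlinarith [r_sq_eq x, mul_pos hr₀ (sub_pos.2 hrx)]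

lemma psi_zero : psi 0 = 0 := by
  simp [psi, r_zero, H_eq_binEntropy_div]

lemma psi_half : psi (1 / 2) = 1 := by
  have hH : H (1 / 2) = 1 := by
    rw [H_eq_binEntropy_div, one_div, binEntropy_two_inv, div_self (log_pos one_lt_two).ne']
  rw [psi, r_half]
  norm_num [hH]

lemma strictMonoOn_Icc_of_hasDerivAt_pos {f f' : ℝ → ℝ} {a b : ℝ} (hf : ContinuousOn f (Icc a b))
    (hf' : ∀ x ∈ Ioo a b, HasDerivAt f (f' x) x) (hpos : ∀ x ∈ Ioo a b, 0 < f' x) :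
    StrictMonoOn f (Icc a b) :=
  strictMonoOn_of_hasDerivWithinAt_pos (convex_Icc a b) hf
    (by simpa only [interior_Icc] using fun x hx ↦ (hf' x hx).hasDerivWithinAt)
    (by simpa only [interior_Icc] using hpos)

lemma strictMonoOn_psi : StrictMonoOn psi (Icc 0 (1 / 2)) :=
  strictMonoOn_Icc_of_hasDerivAt_pos continuous_psi.continuousOn
    (fun _ hx ↦ hasDerivAt_psi hx.1 hx.2)
    (fun _ hx ↦ mul_pos two_pos (logb_pos one_lt_two (psi_deriv_ratio_mem_Ioo hx.1 hx.2).1))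

lemma strictMonoOn_sub_psi : StrictMonoOn (fun x ↦ 2 * logb 2 3 * x - psi x) (Icc 0 (1 / 2)) := by
  refine strictMonoOn_Icc_of_hasDerivAt_pos
    ((continuous_const.mul continuous_id).sub continuous_psi).continuousOn
    (fun x hx ↦ ((hasDerivAt_id' x).const_mul _).sub (hasDerivAt_psi hx.1 hx.2)) ?_
  intro x ⟨hx₀, hx₁⟩
  have ⟨h₁, h₃⟩ := psi_deriv_ratio_mem_Ioo hx₀ hx₁
  have := logb_lt_logb one_lt_two (by linarith) h₃
  linarith

theorem stmt_17 :
    ∀ x ∈ Set.Icc (0 : ℝ) (1 / 2),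
      psi x ≤ min (2 * Real.logb 2 3 * x) 1 ∧
      (psi x = 2 * Real.logb 2 3 * x → x = 0) ∧
      (psi x = 1 → x = 1 / 2) := by
  intro x hx
  have h₀ : (0 : ℝ) ∈ Icc 0 (1 / 2) := left_mem_Icc.2 (by norm_num : (0 : ℝ) ≤ 1 / 2)
  have h₁ : (1 / 2 : ℝ) ∈ Icc 0 (1 / 2) := right_mem_Icc.2 (by norm_num : (0 : ℝ) ≤ 1 / 2)
  have hlin := strictMonoOn_sub_psi.le_iff_le h₀ hx
  have hlin_eq := strictMonoOn_sub_psi.eq_iff_eq h₀ hx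
  have hone := strictMonoOn_psi.le_iff_le hx h₁
  have hone_eq := strictMonoOn_psi.eq_iff_eq hx h₁
  simp only [psi_zero, psi_half, mul_zero, sub_zero] at hlin hlin_eq hone hone_eq
  refine ⟨le_min ?_ (hone.2 hx.2), fun h ↦ (hlin_eq.1 ?_).symm, hone_eq.1⟩
  · linarith [hlin.2 hx.1]
  · linarith
end

section
/- Let $A = S(n,k)$ be the Hamming sphere of radius $k$ in $\mathbb{F}_2^n$ and let $f = \sum_{a \in A} y_a W_a$ with $\sum_a y_a^2 = 1$. Then $\mathbb{E} f^4 \le \sum_{t=0}^{k} \binom{2t}{t} \binom{k}{t}^2$. -/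
open Finset

/-- The Walsh-Fourier character `W_a(x) = (-1)^⟨a,x⟩` on `{0,1}^n ≅ 𝔽₂ⁿ`. -/
def walsh {n : ℕ} (a x : Fin n → ZMod 2) : ℝ := (-1 : ℝ) ^ (∑ i, (a i * x i).val)

/-- The Hamming sphere of radius `k` in `𝔽₂ⁿ`. -/
def sphere (n k : ℕ) : Finset (Fin n → ZMod 2) :=
  Finset.univ.filter (fun x => hammingNorm x = k)

/-!
Write `Y s = y a` for the `k`-set `s` with indicator vector `a`. Expanding `f²` in the Walsh basis
gives the coefficients `g u = ∑_{s ∆ s' = u} Y s Y s'` over pairs of `k`-sets, so by Parseval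
`𝔼 f⁴ = ∑_u (g u)²`, and `g u = 0` unless `|u| = 2t` with `t ≤ k`. Each pair `(s, s')` with
`s ∆ s' = u` splits `u` into the halves `S = s ∩ u` and `u \ S`, both of size `t`. Cauchy–Schwarz
over the `C(2t, t)` halves, and then within each half, bounds `(g u)²` by
`C(2t, t) ∑_S m(S) m(u \ S)`, where `m(S) = ∑_{S ⊆ s} (Y s)²`. As `(u, S) ↦ (S, u \ S)` is
injective, the sum over `|u| = 2t` is at most `C(2t, t) (∑_{|S| = t} m(S))² = C(2t, t) C(k, t)²`.
-/

open scoped symmDiff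

theorem Finset.sum_comp_le_sum_of_injOn {ι κ M : Type*} [AddCommMonoid M] [PartialOrder M]
    [IsOrderedAddMonoid M] {s : Finset ι} {t : Finset κ} (g : ι → κ) (hg : Set.MapsTo g s t)
    (hinj : Set.InjOn g s) {f : κ → M} (hf : ∀ j ∈ t, 0 ≤ f j) :
    ∑ i ∈ s, f (g i) ≤ ∑ j ∈ t, f j := by
  classical
  rw [← sum_image hinj]
  exact sum_le_sum_of_subset_of_nonneg (image_subset_iff.2 hg) fun j hj _ => hf j hj

theorem neg_one_pow_val_add (u v : ZMod 2) :
    (-1 : ℝ) ^ (u + v).val = (-1) ^ u.val * (-1) ^ v.val := by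
  rw [ZMod.val_add, ← neg_one_pow_eq_pow_mod_two, pow_add]

section Walsh

variable {n : ℕ}

theorem walsh_eq_neg_one_pow_dotProduct (a x : Fin n → ZMod 2) :
    walsh a x = (-1) ^ (a ⬝ᵥ x).val := by
  have : a ⬝ᵥ x = ((∑ i, (a i * x i).val : ℕ) : ZMod 2) := by simp [dotProduct]
  rw [walsh, this, ZMod.val_natCast, ← neg_one_pow_eq_pow_mod_two]

theorem walsh_add_left (a b x : Fin n → ZMod 2) :
    walsh (a + b) x = walsh a x * walsh b x := by
  simp only [walsh_eq_neg_one_pow_dotProduct, add_dotProduct, neg_one_pow_val_add]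

theorem walsh_add_right (a x z : Fin n → ZMod 2) :
    walsh a (x + z) = walsh a x * walsh a z := by
  simp only [walsh_eq_neg_one_pow_dotProduct, dotProduct_add, neg_one_pow_val_add]

theorem walsh_zero_left (x : Fin n → ZMod 2) : walsh 0 x = 1 := by
  simp [walsh_eq_neg_one_pow_dotProduct]

theorem sum_walsh (c : Fin n → ZMod 2) :
    ∑ x, walsh c x = if c = 0 then 2 ^ n else 0 := by
  split_ifs with hc
  · simp [hc, walsh_zero_left]
  obtain ⟨i, hi⟩ : ∃ i, c i ≠ 0 := by simpa [funext_iff] using hc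
  set v : Fin n → ZMod 2 := Pi.single i 1
  have hflip : walsh c v = -1 := by
    have hci : c i = 1 := by revert hi; generalize c i = u; revert u; decide
    simp [v, walsh_eq_neg_one_pow_dotProduct, hci, show (1 : ZMod 2).val = 1 from rfl]
  have hneg : ∑ x, walsh c x = -∑ x, walsh c x := by
    calc ∑ x, walsh c x = ∑ x, walsh c (x + v) :=
          (Equiv.sum_comp (Equiv.addRight v) (walsh c)).symm
      _ = -∑ x, walsh c x := by simp only [walsh_add_right, hflip, mul_neg_one, sum_neg_distrib]
  linarith

theorem add_eq_zero_iff_eq_of_zmod_two {a b : Fin n → ZMod 2} : a + b = 0 ↔ a = b := by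
  rw [add_eq_zero_iff_eq_neg, show -b = b from funext fun i => ZMod.neg_eq_self_mod_two _]

theorem sum_walsh_mul_walsh (a b : Fin n → ZMod 2) :
    ∑ x, walsh a x * walsh b x = if a = b then 2 ^ n else 0 := by
  simp only [← walsh_add_left, sum_walsh, add_eq_zero_iff_eq_of_zmod_two]

theorem sum_sq_sum_mul_walsh {ι : Type*} [Fintype ι] {e : ι → Fin n → ZMod 2}
    (he : Function.Injective e) (c : ι → ℝ) :
    ∑ x, (∑ i, c i * walsh (e i) x) ^ 2 = 2 ^ n * ∑ i, c i ^ 2 := by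
  classical
  simp_rw [sq, sum_mul_sum]
  rw [sum_comm]
  calc ∑ i, ∑ x, ∑ j, c i * walsh (e i) x * (c j * walsh (e j) x)
      = ∑ i, ∑ j, c i * c j * ∑ x, walsh (e i) x * walsh (e j) x := by
        refine sum_congr rfl fun i _ => ?_
        rw [sum_comm]
        exact sum_congr rfl fun j _ => by rw [mul_sum]; exact sum_congr rfl fun x _ => by ring
    _ = 2 ^ n * ∑ i, c i * c i := by
        simp_rw [sum_walsh_mul_walsh, he.eq_iff, mul_ite, mul_zero, sum_ite_eq, mem_univ, if_true,
          mul_sum, mul_comm]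

end Walsh

section FinsetEquiv

variable {α : Type*} [Fintype α] [DecidableEq α]

variable (α) in
def finsetEquivZModTwo : Finset α ≃ (α → ZMod 2) where
  toFun s i := if i ∈ s then 1 else 0
  invFun x := {i | x i ≠ 0}
  left_inv s := by ext; simp
  right_inv x := by
    funext i
    simp only [mem_filter, mem_univ, true_and]
    generalize x i = u
    revert u
    decide

theorem finsetEquivZModTwo_apply (s : Finset α) (i : α) :
    finsetEquivZModTwo α s i = if i ∈ s then 1 else 0 := rfl

theorem finsetEquivZModTwo_symmDiff (s t : Finset α) :
    finsetEquivZModTwo α (s ∆ t) = finsetEquivZModTwo α s + finsetEquivZModTwo α t := by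
  funext i
  simp only [finsetEquivZModTwo_apply, Pi.add_apply, mem_symmDiff]
  by_cases hs : i ∈ s <;> by_cases ht : i ∈ t <;>
    simp [hs, ht, show (1 + 1 : ZMod 2) = 0 from rfl]

theorem hammingNorm_finsetEquivZModTwo (s : Finset α) :
    hammingNorm (finsetEquivZModTwo α s) = #s := by
  simp [hammingNorm, finsetEquivZModTwo_apply]

theorem sum_sphere_eq_sum_powersetCard {n : ℕ} (k : ℕ) (F : (Fin n → ZMod 2) → ℝ) :
    ∑ a ∈ sphere n k, F a = ∑ s ∈ powersetCard k univ, F (finsetEquivZModTwo (Fin n) s) :=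
  (sum_equiv (finsetEquivZModTwo (Fin n)) (by simp [sphere, hammingNorm_finsetEquivZModTwo])
    (fun _ _ => rfl)).symm

end FinsetEquiv

section SelfConvolution

variable {α : Type*} [DecidableEq α]

theorem card_symmDiff_add_two_mul_card_inter (s t : Finset α) :
    #(s ∆ t) + 2 * #(s ∩ t) = #s + #t := by
  have hs := card_inter_add_card_sdiff s t
  have ht := card_inter_add_card_sdiff t s
  rw [symmDiff_def, sup_eq_union, card_union_of_disjoint disjoint_sdiff_sdiff]
  rw [inter_comm] at ht
  omega

theorem two_mul_card_inter_symmDiff {s t : Finset α} (h : #s = #t) :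
    2 * #(s ∩ (s ∆ t)) = #(s ∆ t) := by
  have := card_symmDiff_add_two_mul_card_inter s (s ∆ t)
  rw [symmDiff_symmDiff_cancel_left, h] at this
  omega

variable [Fintype α] (k : ℕ) (Y : Finset α → ℝ)

def pairsWithSymmDiff (u : Finset α) : Finset (Finset α × Finset α) :=
  {p ∈ powersetCard k univ ×ˢ powersetCard k univ | p.1 ∆ p.2 = u}

def selfConvolution (u : Finset α) : ℝ :=
  ∑ p ∈ pairsWithSymmDiff k u, Y p.1 * Y p.2

def upMass (S : Finset α) : ℝ :=
  ∑ s ∈ powersetCard k univ with S ⊆ s, Y s ^ 2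

theorem upMass_nonneg (S : Finset α) : 0 ≤ upMass k Y S :=
  sum_nonneg fun _ _ => sq_nonneg _

variable {k} in
theorem two_mul_card_inter_of_mem_pairsWithSymmDiff {u : Finset α} {p : Finset α × Finset α}
    (hp : p ∈ pairsWithSymmDiff k u) : 2 * #(p.1 ∩ u) = #u ∧ #(p.1 ∩ u) ≤ k := by
  obtain ⟨hpK, rfl⟩ := mem_filter.1 hp
  obtain ⟨hp₁, hp₂⟩ := mem_product.1 hpK
  rw [mem_powersetCard] at hp₁ hp₂
  exact ⟨two_mul_card_inter_symmDiff (hp₁.2.trans hp₂.2.symm),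
    hp₁.2 ▸ card_le_card inter_subset_left⟩

theorem exists_card_eq_two_mul_of_selfConvolution_ne_zero {u : Finset α}
    (h : selfConvolution k Y u ≠ 0) : ∃ t ≤ k, #u = 2 * t := by
  obtain ⟨p, hp, -⟩ := exists_ne_zero_of_sum_ne_zero h
  obtain ⟨hcard, hle⟩ := two_mul_card_inter_of_mem_pairsWithSymmDiff hp
  exact ⟨_, hle, hcard.symm⟩

theorem selfConvolution_eq_sum_powersetCard {t : ℕ} {u : Finset α} (hu : #u = 2 * t) :
    selfConvolution k Y u =
      ∑ S ∈ powersetCard t u, ∑ p ∈ pairsWithSymmDiff k u with p.1 ∩ u = S, Y p.1 * Y p.2 := by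
  refine (sum_fiberwise_of_maps_to (fun p hp => ?_) _).symm
  have := (two_mul_card_inter_of_mem_pairsWithSymmDiff hp).1
  exact mem_powersetCard.2 ⟨inter_subset_right, by omega⟩

theorem sq_sum_pairsWithSymmDiff_le_upMass_mul_upMass (u S : Finset α) :
    (∑ p ∈ pairsWithSymmDiff k u with p.1 ∩ u = S, Y p.1 * Y p.2) ^ 2 ≤
      upMass k Y S * upMass k Y (u \ S) := by
  have hmem : ∀ p ∈ {p ∈ pairsWithSymmDiff k u | p.1 ∩ u = S},
      (p.1 ∈ powersetCard k univ ∧ p.2 ∈ powersetCard k univ) ∧ p.1 ∆ p.2 = u ∧ p.1 ∩ u = S :=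
    fun p hp => by simpa [pairsWithSymmDiff, and_assoc] using hp
  refine (sum_mul_sq_le_sq_mul_sq _ _ _).trans
    (mul_le_mul ?_ ?_ (sum_nonneg fun _ _ => sq_nonneg _) (upMass_nonneg k Y S))
  · refine sum_comp_le_sum_of_injOn (f := fun s => Y s ^ 2) Prod.fst (fun p hp => ?_)
      (fun p hp q hq hpq => ?_) fun _ _ => sq_nonneg _
    · obtain ⟨⟨hp₁, -⟩, -, rfl⟩ := hmem p hp
      exact mem_filter.2 ⟨hp₁, inter_subset_left⟩
    · obtain ⟨-, hpu, -⟩ := hmem p hp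
      obtain ⟨-, hqu, -⟩ := hmem q hq
      exact Prod.ext hpq ((symmDiff_right_inj (a := p.1)).1 (by rw [hpu, hpq, hqu]))
  · refine sum_comp_le_sum_of_injOn (f := fun s => Y s ^ 2) Prod.snd (fun p hp => ?_)
      (fun p hp q hq hpq => ?_) fun _ _ => sq_nonneg _
    · obtain ⟨⟨-, hp₂⟩, rfl, rfl⟩ := hmem p hp
      refine mem_filter.2 ⟨hp₂, fun i hi => ?_⟩
      simp only [mem_sdiff, mem_inter, mem_symmDiff] at hi
      tauto
    · obtain ⟨-, hpu, -⟩ := hmem p hp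
      obtain ⟨-, hqu, -⟩ := hmem q hq
      exact Prod.ext ((symmDiff_left_inj (b := p.2)).1 (by rw [hpu, hpq, hqu])) hpq

theorem sum_powersetCard_upMass (t : ℕ) :
    ∑ S ∈ powersetCard t univ, upMass k Y S = k.choose t * ∑ s ∈ powersetCard k univ, Y s ^ 2 := by
  simp only [upMass]
  rw [sum_comm' (t' := powersetCard k univ) (s' := fun s => powersetCard t s)
    fun S s => by simp only [mem_powersetCard, mem_filter, subset_univ, true_and]; tauto, mul_sum]
  refine sum_congr rfl fun s hs => ?_
  rw [sum_const, card_powersetCard, (mem_powersetCard.1 hs).2, nsmul_eq_mul]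

theorem sum_upMass_mul_upMass_sdiff_le (t : ℕ) :
    ∑ u ∈ powersetCard (2 * t) univ, ∑ S ∈ powersetCard t u, upMass k Y S * upMass k Y (u \ S) ≤
      (∑ S ∈ powersetCard t univ, upMass k Y S) ^ 2 := by
  rw [sum_comm' (t' := powersetCard t univ)
    (s' := fun S => {u ∈ powersetCard (2 * t) univ | S ⊆ u})
    fun u S => by simp only [mem_powersetCard, mem_filter, subset_univ, true_and]; tauto,
    sq, sum_mul_sum]
  gcongr with S hS
  refine sum_comp_le_sum_of_injOn (f := fun T => upMass k Y S * upMass k Y T) (· \ S)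
    (fun u hu => ?_) (fun u hu v hv huv => ?_)
    fun _ _ => mul_nonneg (upMass_nonneg k Y S) (upMass_nonneg k Y _)
  · simp only [coe_filter, mem_powersetCard, Set.mem_ofPred_eq] at hu hS
    rw [mem_coe, mem_powersetCard, card_sdiff_of_subset hu.2, hu.1.2, hS.2]
    exact ⟨subset_univ _, by omega⟩
  · simp only [coe_filter, Set.mem_ofPred_eq] at hu hv
    rw [← sdiff_union_of_subset hu.2, ← sdiff_union_of_subset hv.2]
    exact congrArg (· ∪ S) huv

theorem sum_sq_selfConvolution_powersetCard_le (t : ℕ) :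
    ∑ u ∈ powersetCard (2 * t) univ, selfConvolution k Y u ^ 2 ≤
      (2 * t).choose t * (k.choose t * ∑ s ∈ powersetCard k univ, Y s ^ 2) ^ 2 := by
  calc ∑ u ∈ powersetCard (2 * t) univ, selfConvolution k Y u ^ 2
      ≤ ∑ u ∈ powersetCard (2 * t) univ,
          (2 * t).choose t * ∑ S ∈ powersetCard t u, upMass k Y S * upMass k Y (u \ S) := by
        gcongr with u hu
        have hu : #u = 2 * t := (mem_powersetCard.1 hu).2
        rw [selfConvolution_eq_sum_powersetCard k Y hu]
        refine sq_sum_le_card_mul_sum_sq.trans ?_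
        rw [card_powersetCard, hu]
        gcongr with S
        exact sq_sum_pairsWithSymmDiff_le_upMass_mul_upMass k Y u S
    _ = (2 * t).choose t * ∑ u ∈ powersetCard (2 * t) univ,
          ∑ S ∈ powersetCard t u, upMass k Y S * upMass k Y (u \ S) :=
        (mul_sum ..).symm
    _ ≤ (2 * t).choose t * (∑ S ∈ powersetCard t univ, upMass k Y S) ^ 2 := by
        gcongr
        exact sum_upMass_mul_upMass_sdiff_le k Y t
    _ = _ := by rw [sum_powersetCard_upMass]

theorem sum_sq_selfConvolution_le :
    ∑ u, selfConvolution k Y u ^ 2 ≤ ∑ t ∈ range (k + 1),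
      (2 * t).choose t * (k.choose t * ∑ s ∈ powersetCard k univ, Y s ^ 2) ^ 2 := by
  calc ∑ u, selfConvolution k Y u ^ 2
      = ∑ u ∈ (range (k + 1)).biUnion fun t => powersetCard (2 * t) univ,
          selfConvolution k Y u ^ 2 := by
        refine (sum_subset (subset_univ _) fun u _ hu => ?_).symm
        by_contra h
        obtain ⟨t, ht, hcard⟩ := exists_card_eq_two_mul_of_selfConvolution_ne_zero k Y
          (pow_ne_zero_iff two_ne_zero |>.1 h)
        exact hu (mem_biUnion.2
          ⟨t, mem_range.2 (by omega), mem_powersetCard.2 ⟨subset_univ _, hcard⟩⟩)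
    _ = ∑ t ∈ range (k + 1), ∑ u ∈ powersetCard (2 * t) univ, selfConvolution k Y u ^ 2 := by
        refine sum_biUnion fun t₁ _ t₂ _ hne => disjoint_left.2 fun u h₁ h₂ => hne ?_
        simp only [mem_powersetCard] at h₁ h₂
        omega
    _ ≤ _ := sum_le_sum fun t _ => sum_sq_selfConvolution_powersetCard_le k Y t

end SelfConvolution

theorem sq_sum_mul_walsh_eq_sum_selfConvolution {n : ℕ} (k : ℕ) (Y : Finset (Fin n) → ℝ)
    (x : Fin n → ZMod 2) :
    (∑ s ∈ powersetCard k univ, Y s * walsh (finsetEquivZModTwo (Fin n) s) x) ^ 2 =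
      ∑ u, selfConvolution k Y u * walsh (finsetEquivZModTwo (Fin n) u) x := by
  rw [sq, sum_mul_sum, ← sum_product', ← sum_fiberwise _ fun p => p.1 ∆ p.2]
  refine sum_congr rfl fun u _ => ?_
  rw [selfConvolution, sum_mul]
  refine sum_congr rfl fun p hp => ?_
  rw [← (mem_filter.1 hp).2, finsetEquivZModTwo_symmDiff, walsh_add_left]
  ring

theorem stmt_19_general (n k : ℕ) (y : (Fin n → ZMod 2) → ℝ)
    (hy : ∑ a ∈ sphere n k, (y a) ^ 2 = 1) :
    (∑ x, (∑ a ∈ sphere n k, y a * walsh a x) ^ 4) / 2 ^ n ≤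
      ∑ t ∈ Finset.range (k + 1), ((2 * t).choose t * (k.choose t) ^ 2 : ℕ) := by
  set e := finsetEquivZModTwo (Fin n)
  have hY : ∑ s ∈ powersetCard k univ, y (e s) ^ 2 = 1 := by
    rw [← hy, sum_sphere_eq_sum_powersetCard]
  calc (∑ x, (∑ a ∈ sphere n k, y a * walsh a x) ^ 4) / 2 ^ n
      = (∑ x, (∑ u, selfConvolution k (y ∘ e) u * walsh (e u) x) ^ 2) / 2 ^ n := by
        refine congrArg (· / _) (sum_congr rfl fun x _ => ?_)
        rw [sum_sphere_eq_sum_powersetCard, ← sq_sum_mul_walsh_eq_sum_selfConvolution, ← pow_mul]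
        rfl
    _ = ∑ u, selfConvolution k (y ∘ e) u ^ 2 := by
        rw [sum_sq_sum_mul_walsh e.injective]
        field_simp
    _ ≤ _ := sum_sq_selfConvolution_le k (y ∘ e)
    _ = _ := by simp [hY]

theorem stmt_19 (n k : ℕ) (hk : k ≤ n) (y : (Fin n → ZMod 2) → ℝ)
    (hy : ∑ a ∈ sphere n k, (y a) ^ 2 = 1) :
    (∑ x, (∑ a ∈ sphere n k, y a * walsh a x) ^ 4) / 2 ^ n ≤
      ∑ t ∈ Finset.range (k + 1), ((2 * t).choose t * (k.choose t) ^ 2 : ℕ) :=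
  stmt_19_general n k y hy
end
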